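/- If a propositional formula A is valid (true under every boolean valuation), then A is provable in the classical natural deduction calculus Nc from the empty context. -/

import Mathlib

inductive PropF (V : Type) : Type
  | Var : V → PropF V
  | Bot : PropF V
  | Conj : PropF V → PropF V → PropF V
  | Disj : PropF V → PropF V → PropF V
  | Impl : PropF V → PropF V → PropF V
deriving DecidableEq

variable {V : Type} [DecidableEq V]

def PropF.Neg (A : PropF V) : PropF V := A.Impl .Bot
def PropF.Top : PropF V := PropF.Neg .Bot

def TrueQ (v : V → Bool) : PropF V → Bool
  | .Var p => v p
  | .Bot => false
  | .Conj B C => TrueQ v B && TrueQ v C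
  | .Disj B C => TrueQ v B || TrueQ v C
  | .Impl B C => !(TrueQ v B) || TrueQ v C

def Satisfies (v : V → Bool) (Γ : List (PropF V)) : Prop := ∀ A ∈ Γ, TrueQ v A = true
def Models (Γ : List (PropF V)) (A : PropF V) : Prop := ∀ v, Satisfies v Γ → TrueQ v A = true
def Valid (A : PropF V) : Prop := Models [] A
def Validates (v : V → Bool) (Δ : List (PropF V)) : Prop := ∃ A ∈ Δ, TrueQ v A = true

inductive Nc : List (PropF V) → PropF V → Prop
  | Nax (Γ : List (PropF V)) (A : PropF V) : A ∈ Γ → Nc Γ A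
  | ImpI (Γ : List (PropF V)) (A B : PropF V) : Nc (A :: Γ) B → Nc Γ (A.Impl B)
  | ImpE (Γ : List (PropF V)) (A B : PropF V) : Nc Γ (A.Impl B) → Nc Γ A → Nc Γ B
  | BotC (Γ : List (PropF V)) (A : PropF V) : Nc (A.Neg :: Γ) .Bot → Nc Γ A
  | AndI (Γ : List (PropF V)) (A B : PropF V) : Nc Γ A → Nc Γ B → Nc Γ (A.Conj B)
  | AndE1 (Γ : List (PropF V)) (A B : PropF V) : Nc Γ (A.Conj B) → Nc Γ A
  | AndE2 (Γ : List (PropF V)) (A B : PropF V) : Nc Γ (A.Conj B) → Nc Γ B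
  | OrI1 (Γ : List (PropF V)) (A B : PropF V) : Nc Γ A → Nc Γ (A.Disj B)
  | OrI2 (Γ : List (PropF V)) (A B : PropF V) : Nc Γ B → Nc Γ (A.Disj B)
  | OrE (Γ : List (PropF V)) (A B C : PropF V) : Nc Γ (A.Disj B) → Nc (A :: Γ) C → Nc (B :: Γ) C → Nc Γ C

def Provable (A : PropF V) : Prop := Nc [] A

inductive NNF (V : Type) : Type
  | NPos : V → NNF V
  | NNeg : V → NNF V
  | NBot : NNF V
  | NTop : NNF V
  | NConj : NNF V → NNF V → NNF V
  | NDisj : NNF V → NNF V → NNF V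
deriving DecidableEq

def NNFtoPropF : NNF V → PropF V
  | .NPos p => .Var p
  | .NNeg p => (PropF.Var p).Neg
  | .NBot => .Bot
  | .NTop => PropF.Top
  | .NConj B C => (NNFtoPropF B).Conj (NNFtoPropF C)
  | .NDisj B C => (NNFtoPropF B).Disj (NNFtoPropF C)

mutual
def MakeNNF : PropF V → NNF V
  | .Var p => .NPos p
  | .Bot => .NBot
  | .Disj B C => .NDisj (MakeNNF B) (MakeNNF C)
  | .Conj B C => .NConj (MakeNNF B) (MakeNNF C)
  | .Impl B C => .NDisj (MakeNNFN B) (MakeNNF C)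
def MakeNNFN : PropF V → NNF V
  | .Var p => .NNeg p
  | .Bot => .NTop
  | .Disj B C => .NConj (MakeNNFN B) (MakeNNFN C)
  | .Conj B C => .NDisj (MakeNNFN B) (MakeNNFN C)
  | .Impl B C => .NConj (MakeNNF B) (MakeNNFN C)
end

inductive Lit (V : Type) : Type
  | LPos : V → Lit V
  | LNeg : V → Lit V
  | LBot : Lit V
  | LTop : Lit V
deriving DecidableEq

def LiteraltoPropF : Lit V → PropF V
  | .LPos p => .Var p
  | .LNeg p => (PropF.Var p).Neg
  | .LBot => .Bot
  | .LTop => PropF.Top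

abbrev Clause (V : Type) : Type := List (Lit V)
abbrev CNF (V : Type) : Type := List (Clause V)

abbrev ClausetoPropF (l : Clause V) : PropF V :=
  l.foldr (fun a r => (LiteraltoPropF a).Disj r) .Bot

def CNFtoPropF (ll : CNF V) : PropF V :=
  ll.foldr (fun c r => (ClausetoPropF c).Conj r) PropF.Top

def AddClause (l : Clause V) (ll : CNF V) : CNF V := ll.map (fun l2 => l ++ l2)
def Disjunct (ll ll2 : CNF V) : CNF V := ll.flatMap (fun l => AddClause l ll2)

def MakeCNF : NNF V → CNF V
  | .NPos p => [[.LPos p]]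
  | .NNeg p => [[.LNeg p]]
  | .NBot => [[.LBot]]
  | .NTop => [[.LTop]]
  | .NConj B C => MakeCNF B ++ MakeCNF C
  | .NDisj B C => Disjunct (MakeCNF B) (MakeCNF C)

def Valid_Clause (l : Clause V) : Prop :=
  Lit.LTop ∈ l ∨ ∃ p, Lit.LPos p ∈ l ∧ Lit.LNeg p ∈ l
def Valid_CNF (ll : CNF V) : Prop := ∀ l ∈ ll, Valid_Clause l

inductive AxiomH : PropF V → Prop
  | HOrI1 (A B : PropF V) : AxiomH (A.Impl (A.Disj B))
  | HOrI2 (A B : PropF V) : AxiomH (B.Impl (A.Disj B))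
  | HAndI (A B : PropF V) : AxiomH (A.Impl (B.Impl (A.Conj B)))
  | HOrE (A B C : PropF V) : AxiomH ((A.Disj B).Impl ((A.Impl C).Impl ((B.Impl C).Impl C)))
  | HAndE1 (A B : PropF V) : AxiomH ((A.Conj B).Impl A)
  | HAndE2 (A B : PropF V) : AxiomH ((A.Conj B).Impl B)
  | HS (A B C : PropF V) : AxiomH ((A.Impl (B.Impl C)).Impl ((A.Impl B).Impl (A.Impl C)))
  | HK (A B : PropF V) : AxiomH (A.Impl (B.Impl A))
  | HClas (A : PropF V) : AxiomH ((A.Neg.Neg).Impl A)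

inductive Hc : List (PropF V) → PropF V → Prop
  | Hass (A : PropF V) (Γ : List (PropF V)) : A ∈ Γ → Hc Γ A
  | Hax (A : PropF V) (Γ : List (PropF V)) : AxiomH A → Hc Γ A
  | HImpE (Γ : List (PropF V)) (A B : PropF V) : Hc Γ (A.Impl B) → Hc Γ A → Hc Γ B

inductive G : List (PropF V) → List (PropF V) → Prop
  | Gax (A : PropF V) (Γ Δ : List (PropF V)) : A ∈ Γ → A ∈ Δ → G Γ Δ
  | GBot (Γ Δ : List (PropF V)) : PropF.Bot ∈ Γ → G Γ Δ
  | AndL (A B : PropF V) (Γ1 Γ2 Δ : List (PropF V)) : G (Γ1 ++ A :: B :: Γ2) Δ → G (Γ1 ++ (A.Conj B) :: Γ2) Δ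
  | AndR (A B : PropF V) (Γ Δ1 Δ2 : List (PropF V)) : G Γ (Δ1 ++ A :: Δ2) → G Γ (Δ1 ++ B :: Δ2) → G Γ (Δ1 ++ (A.Conj B) :: Δ2)
  | OrL (A B : PropF V) (Γ1 Γ2 Δ : List (PropF V)) : G (Γ1 ++ A :: Γ2) Δ → G (Γ1 ++ B :: Γ2) Δ → G (Γ1 ++ (A.Disj B) :: Γ2) Δ
  | OrR (A B : PropF V) (Γ Δ1 Δ2 : List (PropF V)) : G Γ (Δ1 ++ A :: B :: Δ2) → G Γ (Δ1 ++ (A.Disj B) :: Δ2)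
  | ImpL (A B : PropF V) (Γ1 Γ2 Δ : List (PropF V)) : G (Γ1 ++ B :: Γ2) Δ → G (Γ1 ++ Γ2) (A :: Δ) → G (Γ1 ++ (A.Impl B) :: Γ2) Δ
  | ImpR (A B : PropF V) (Γ Δ1 Δ2 : List (PropF V)) : G (A :: Γ) (Δ1 ++ B :: Δ2) → G Γ (Δ1 ++ (A.Impl B) :: Δ2)
  | Cut (A : PropF V) (Γ Δ : List (PropF V)) : G Γ (A :: Δ) → G (A :: Γ) Δ → G Γ Δ

inductive Gcf : List (PropF V) → List (PropF V) → Prop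
  | Gax (p : V) (Γ Δ : List (PropF V)) : PropF.Var p ∈ Γ → PropF.Var p ∈ Δ → Gcf Γ Δ
  | GBot (Γ Δ : List (PropF V)) : PropF.Bot ∈ Γ → Gcf Γ Δ
  | AndL (A B : PropF V) (Γ1 Γ2 Δ : List (PropF V)) : Gcf (Γ1 ++ A :: B :: Γ2) Δ → Gcf (Γ1 ++ (A.Conj B) :: Γ2) Δ
  | AndR (A B : PropF V) (Γ Δ1 Δ2 : List (PropF V)) : Gcf Γ (Δ1 ++ A :: Δ2) → Gcf Γ (Δ1 ++ B :: Δ2) → Gcf Γ (Δ1 ++ (A.Conj B) :: Δ2)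
  | OrL (A B : PropF V) (Γ1 Γ2 Δ : List (PropF V)) : Gcf (Γ1 ++ A :: Γ2) Δ → Gcf (Γ1 ++ B :: Γ2) Δ → Gcf (Γ1 ++ (A.Disj B) :: Γ2) Δ
  | OrR (A B : PropF V) (Γ Δ1 Δ2 : List (PropF V)) : Gcf Γ (Δ1 ++ A :: B :: Δ2) → Gcf Γ (Δ1 ++ (A.Disj B) :: Δ2)
  | ImpL (A B : PropF V) (Γ1 Γ2 Δ : List (PropF V)) : Gcf (Γ1 ++ B :: Γ2) Δ → Gcf (Γ1 ++ Γ2) (A :: Δ) → Gcf (Γ1 ++ (A.Impl B) :: Γ2) Δ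
  | ImpR (A B : PropF V) (Γ Δ1 Δ2 : List (PropF V)) : Gcf (A :: Γ) (Δ1 ++ B :: Δ2) → Gcf Γ (Δ1 ++ (A.Impl B) :: Δ2)

def BigOr (Δ : List (PropF V)) : PropF V := Δ.foldr PropF.Disj .Bot

def size : PropF V → Nat
  | .Var _ => 0
  | .Bot => 0
  | .Conj B C => (size B + size C).succ
  | .Disj B C => (size B + size C).succ
  | .Impl B C => (size B + size C).succ

def sizel (Γ : List (PropF V)) : Nat := (Γ.map size).sum
def sizes (Γ Δ : List (PropF V)) : Nat := sizel Γ + sizel Δ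

/-!
Kalmár's argument. For a valuation `v`, let `A.signed v` be `A` if `v` makes `A` true and `¬A`
otherwise. By induction on `A`, `A.signed v` is derivable from the signed variables of `A`.
If `A` is valid, `A.signed v = A` for every `v`. The signed variables are then discharged one at
a time: excluded middle on `p` splits into two cases, each covered by `v` updated at `p`.
-/

namespace PropF

section
omit [DecidableEq V]

def signed (v : V → Bool) (A : PropF V) : PropF V := if TrueQ v A then A else A.Neg

def vars : PropF V → List V
  | .Var p => [p]
  | .Bot => []
  | .Conj B C | .Disj B C | .Impl B C => vars B ++ vars C

theorem signed_of_true {v : V → Bool} {A : PropF V} (h : TrueQ v A = true) : A.signed v = A :=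
  if_pos h

theorem signed_of_false {v : V → Bool} {A : PropF V} (h : TrueQ v A = false) :
    A.signed v = A.Neg :=
  if_neg (by simp [h])

end

theorem signed_var_update_self (v : V → Bool) (p : V) (b : Bool) :
    (Var p).signed (Function.update v p b) = if b then Var p else (Var p).Neg := by
  cases b <;> simp [signed, TrueQ]

theorem map_signed_var_update_subset (v : V → Bool) (p : V) (b : Bool) (L : List V) :
    L.map (fun q => (Var q).signed (Function.update v p b)) ⊆
      (Var p).signed (Function.update v p b) :: L.map (fun q => (Var q).signed v) := by
  intro x hx
  obtain ⟨q, hq, rfl⟩ := List.mem_map.1 hx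
  by_cases hqp : q = p
  · subst hqp
    exact List.mem_cons_self
  · have : (Var q).signed (Function.update v p b) = (Var q).signed v := by
      rw [signed, signed, TrueQ, TrueQ, Function.update_of_ne hqp]
    exact this ▸ List.mem_cons_of_mem _ (List.mem_map_of_mem hq)

end PropF

namespace Nc

section
omit [DecidableEq V]
variable {Γ Δ : List (PropF V)} {A B C : PropF V}

theorem weaken (h : Nc Γ A) (hΓ : Γ ⊆ Δ) : Nc Δ A := by
  induction h generalizing Δ with
  | Nax _ _ hA => exact .Nax _ _ (hΓ hA)
  | ImpI _ _ _ _ ih => exact .ImpI _ _ _ (ih (List.cons_subset_cons _ hΓ))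
  | ImpE _ _ _ _ _ ih₁ ih₂ => exact .ImpE _ _ _ (ih₁ hΓ) (ih₂ hΓ)
  | BotC _ _ _ ih => exact .BotC _ _ (ih (List.cons_subset_cons _ hΓ))
  | AndI _ _ _ _ _ ih₁ ih₂ => exact .AndI _ _ _ (ih₁ hΓ) (ih₂ hΓ)
  | AndE1 _ _ _ _ ih => exact .AndE1 _ _ _ (ih hΓ)
  | AndE2 _ _ _ _ ih => exact .AndE2 _ _ _ (ih hΓ)
  | OrI1 _ _ _ _ ih => exact .OrI1 _ _ _ (ih hΓ)
  | OrI2 _ _ _ _ ih => exact .OrI2 _ _ _ (ih hΓ)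
  | OrE _ _ _ _ _ _ _ ih₁ ih₂ ih₃ =>
      exact .OrE _ _ _ _ (ih₁ hΓ) (ih₂ (List.cons_subset_cons _ hΓ))
        (ih₃ (List.cons_subset_cons _ hΓ))

theorem weaken_cons (h : Nc Γ A) : Nc (B :: Γ) A :=
  h.weaken (List.subset_cons_self _ _)

theorem head : Nc (A :: Γ) A :=
  .Nax _ _ List.mem_cons_self

theorem botE (h : Nc Γ .Bot) : Nc Γ A :=
  .BotC _ _ h.weaken_cons

theorem em : Nc Γ (A.Disj A.Neg) :=
  .BotC _ _ <| .ImpE _ _ _ head <| .OrI2 _ _ _ <| .ImpI _ _ _ <|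
    .ImpE _ _ _ head.weaken_cons (.OrI1 _ _ _ head)

theorem byCases (hpos : Nc (A :: Γ) B) (hneg : Nc (A.Neg :: Γ) B) : Nc Γ B :=
  .OrE _ _ _ _ em hpos hneg

theorem neg_bot : Nc Γ PropF.Bot.Neg :=
  .ImpI _ _ _ head

theorem impl_of_right (h : Nc Γ B) : Nc Γ (A.Impl B) :=
  .ImpI _ _ _ h.weaken_cons

theorem impl_of_neg (h : Nc Γ A.Neg) : Nc Γ (A.Impl B) :=
  .ImpI _ _ _ (botE (.ImpE _ _ _ h.weaken_cons head))

theorem neg_conj_left (h : Nc Γ A.Neg) : Nc Γ (A.Conj B).Neg :=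
  .ImpI _ _ _ (.ImpE _ _ _ h.weaken_cons (.AndE1 _ _ _ head))

theorem neg_conj_right (h : Nc Γ B.Neg) : Nc Γ (A.Conj B).Neg :=
  .ImpI _ _ _ (.ImpE _ _ _ h.weaken_cons (.AndE2 _ _ _ head))

theorem neg_disj (hA : Nc Γ A.Neg) (hB : Nc Γ B.Neg) : Nc Γ (A.Disj B).Neg :=
  .ImpI _ _ _ <| .OrE _ _ _ _ head
    (.ImpE _ _ _ hA.weaken_cons.weaken_cons head) (.ImpE _ _ _ hB.weaken_cons.weaken_cons head)

theorem neg_impl (hA : Nc Γ A) (hB : Nc Γ B.Neg) : Nc Γ (A.Impl B).Neg :=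
  .ImpI _ _ _ (.ImpE _ _ _ hB.weaken_cons (.ImpE _ _ _ head hA.weaken_cons))

end

open PropF in
omit [DecidableEq V] in
/-- Kalmár's lemma. -/
theorem signed_of_signed_vars_subset (v : V → Bool) (A : PropF V) {Γ : List (PropF V)}
    (hΓ : A.vars.map (fun p => (Var p).signed v) ⊆ Γ) : Nc Γ (A.signed v) := by
  induction A
  case Var p => exact .Nax _ _ (hΓ List.mem_cons_self)
  case Bot => simpa [signed, TrueQ] using neg_bot
  all_goals
    rename_i B C ihB ihC
    simp only [vars, List.map_append, List.append_subset] at hΓ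
    have hB := ihB hΓ.1
    have hC := ihC hΓ.2
    cases hb : TrueQ v B <;> cases hc : TrueQ v C <;>
      simp only [signed_of_true, signed_of_false, TrueQ, hb, hc, Bool.and_false, Bool.and_true,
        Bool.or_false, Bool.or_true, Bool.not_true, Bool.not_false] at hB hC ⊢
  case Conj.false.false | Conj.false.true => exact neg_conj_left hB
  case Conj.true.false => exact neg_conj_right hC
  case Conj.true.true => exact .AndI _ _ _ hB hC
  case Disj.false.false => exact neg_disj hB hC
  case Disj.false.true => exact .OrI2 _ _ _ hC
  case Disj.true.false | Disj.true.true => exact .OrI1 _ _ _ hB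
  case Impl.false.false | Impl.false.true => exact impl_of_neg hB
  case Impl.true.false => exact neg_impl hB hC
  case Impl.true.true => exact impl_of_right hC

open PropF in
theorem of_forall_signed_vars {A : PropF V} (L : List V)
    (h : ∀ v, Nc (L.map fun p => (Var p).signed v) A) : Nc [] A := by
  induction L with
  | nil => exact h fun _ => false
  | cons p L ih =>
      refine ih fun v => ?_
      have hcase (b : Bool) :
          Nc ((Var p).signed (Function.update v p b) :: L.map fun q => (Var q).signed v) A :=
        (h _).weaken <|
          List.cons_subset.2 ⟨List.mem_cons_self, map_signed_var_update_subset v p b L⟩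
      exact byCases (by simpa [signed_var_update_self] using hcase true)
        (by simpa [signed_var_update_self] using hcase false)

end Nc

theorem stmt1 {V : Type} [DecidableEq V] (A : PropF V) (h : Valid A) : Provable A := by
  refine Nc.of_forall_signed_vars A.vars fun v => ?_
  have hA : A.signed v = A := PropF.signed_of_true (h v (by simp [Satisfies]))
  have hsigned := Nc.signed_of_signed_vars_subset v A (List.Subset.refl _)
  rwa [hA] at hsigned
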